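/- Let f : ℝ^{n×p} → ℝ be continuously differentiable, let σ ≠ 0 and β > 0, define A(X) = (1 − σ)X + σXXᵀX, and define h(X) = (1 + 1/(2σ))·f(X) − (1/(2σ))·f(A(X)) + (β/4)·‖XᵀX − I_p‖_F². Then h is differentiable and for every X ∈ ℝ^{n×p}, ∇h(X) = (1 + 1/(2σ))·∇f(X) − ∇f(A(X))·(((1 − σ)/(2σ))·I_p + (1/2)·XᵀX) − X·sym(Xᵀ∇f(A(X))) + β·X(XᵀX − I_p). -/

import Mathlib

/-! Differentiability of `h` follows from the product rule for the bilinear maps `(A, B) ↦ A * B`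
and `(A, B) ↦ tr(AᵀB)`. The gradient is read off along the lines `t ↦ X + t • V`: the directional
derivative of `f ∘ A` is `⟨∇f(A X), (1 - σ) V + σ (V XᵀX + X VᵀX + X XᵀV)⟩`, and cycling the trace
moves `V` out of the inner product, giving `⟨∇f(A X)((1 - σ) I + σ XᵀX) + 2σ X sym(Xᵀ∇f(A X)), V⟩`.
The penalty term contributes `⟨β X(XᵀX - I), V⟩` in the same way, since `XᵀX - I` is symmetric. -/

open Matrix BigOperators Finset Kronecker

/- Equip matrix spaces with the Frobenius norm (finite-dimensional, so the resulting calculus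
notions such as `fderiv`/`Differentiable` are norm-independent). -/
attribute [local instance] Matrix.frobeniusNormedAddCommGroup Matrix.frobeniusNormedSpace

/-- The Frobenius norm of a real matrix. -/
noncomputable def frob {m k : Type*} [Fintype m] [Fintype k] (A : Matrix m k ℝ) : ℝ :=
  Real.sqrt (∑ i, ∑ j, (A i j) ^ 2)

/-- The trace inner product ⟨A, B⟩ = tr(AᵀB) of real matrices. -/
noncomputable def minner {m k : Type*} [Fintype m] [Fintype k] (A B : Matrix m k ℝ) : ℝ :=
  (Aᵀ * B).trace

/-- The symmetric part sym(B) = (B + Bᵀ)/2 of a square matrix. -/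
noncomputable def symPart {k : Type*} (B : Matrix k k ℝ) : Matrix k k ℝ :=
  (1 / 2 : ℝ) • (B + Bᵀ)

/-- The generalized Riemannian gradient G(X) = ∇f(X)((3/2)I - (1/2)XᵀX) - X·sym(Xᵀ∇f(X)),
expressed in terms of the Euclidean gradient matrix `Gf = ∇f(X)`. -/
noncomputable def Gdir {n p : ℕ} (Gf X : Matrix (Fin n) (Fin p) ℝ) :
    Matrix (Fin n) (Fin p) ℝ :=
  Gf * ((3 / 2 : ℝ) • (1 : Matrix (Fin p) (Fin p) ℝ) - (1 / 2 : ℝ) • (Xᵀ * X))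
    - X * symPart (Xᵀ * Gf)

/-- The feasibility direction E(X) = X(XᵀX - I). -/
noncomputable def Edir {n p : ℕ} (X : Matrix (Fin n) (Fin p) ℝ) :
    Matrix (Fin n) (Fin p) ℝ :=
  X * (Xᵀ * X - 1)

/-- The spectral norm (largest singular value) of a real matrix, as the operator norm of the
associated Euclidean linear map. -/
noncomputable def specNorm {m k : Type*} [Fintype m] [Fintype k] [DecidableEq k]
    (A : Matrix m k ℝ) : ℝ :=
  ‖LinearMap.toContinuousLinearMap (Matrix.toEuclideanLin A)‖

theorem Matrix.isHermitian_transpose_mul_self {m k α : Type*} [Fintype m] [CommSemiring α]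
    [StarRing α] [TrivialStar α] (A : Matrix m k α) : (Aᵀ * A).IsHermitian := by
  rw [IsHermitian, conjTranspose_mul, conjTranspose_eq_transpose_of_trivial,
    conjTranspose_eq_transpose_of_trivial, transpose_transpose]

/-- The smallest singular value of a real matrix: the square root of the smallest eigenvalue
of AᵀA (= AᴴA over ℝ). -/
noncomputable def sigmaMin {m k : Type*} [Fintype m] [Fintype k] [DecidableEq m] [DecidableEq k]
    (A : Matrix m k ℝ) : ℝ :=
  Real.sqrt (⨅ i, (Matrix.isHermitian_transpose_mul_self A).eigenvalues i)

section BilinearCalculus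

variable {E F₁ F₂ G : Type*} [NormedAddCommGroup E] [NormedSpace ℝ E]
  [NormedAddCommGroup F₁] [NormedSpace ℝ F₁] [FiniteDimensional ℝ F₁]
  [NormedAddCommGroup F₂] [NormedSpace ℝ F₂] [FiniteDimensional ℝ F₂]
  [NormedAddCommGroup G] [NormedSpace ℝ G] (B : F₁ →ₗ[ℝ] F₂ →ₗ[ℝ] G)

theorem LinearMap.differentiableAt_bilinear {u : E → F₁} {v : E → F₂} {x : E}
    (hu : DifferentiableAt ℝ u x) (hv : DifferentiableAt ℝ v x) :
    DifferentiableAt ℝ (fun y => B (u y) (v y)) x :=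
  (B.toContinuousBilinearMap.hasFDerivAt_of_bilinear hu.hasFDerivAt hv.hasFDerivAt).differentiableAt

theorem LinearMap.hasDerivAt_bilinear {u : ℝ → F₁} {v : ℝ → F₂} {u' : F₁} {v' : F₂} {t : ℝ}
    (hu : HasDerivAt u u' t) (hv : HasDerivAt v v' t) :
    HasDerivAt (fun s => B (u s) (v s)) (B u' (v t) + B (u t) v') t := by
  refine (B.toContinuousBilinearMap.hasFDerivAt_of_bilinear hu.hasFDerivAt
    hv.hasFDerivAt).hasDerivAt.congr_deriv ?_
  simp [LinearMap.toContinuousBilinearMap_apply, add_comm]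

end BilinearCalculus

section LineDerivative

variable {E F : Type*} [NormedAddCommGroup E] [NormedSpace ℝ E] [NormedAddCommGroup F]
  [NormedSpace ℝ F]

theorem hasDerivAt_add_smul (X V : E) (t : ℝ) : HasDerivAt (fun s : ℝ => X + s • V) V t := by
  simpa using ((hasDerivAt_id t).smul_const V).const_add X

theorem fderiv_apply_eq_of_hasDerivAt_add_smul {g : E → F} {X V : E} {c : F}
    (hg : DifferentiableAt ℝ g X) (hc : HasDerivAt (fun t : ℝ => g (X + t • V)) c 0) :
    fderiv ℝ g X V = c :=
  (hg.hasFDerivAt.comp_hasDerivAt_of_eq 0 (hasDerivAt_add_smul X V 0) (by simp)).unique hc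

end LineDerivative

section TraceInner

variable {l m k : Type*} [Fintype l] [Fintype m] [Fintype k]

theorem minner_comm (A B : Matrix m k ℝ) : minner A B = minner B A := by
  rw [minner, minner, ← trace_transpose, transpose_mul, transpose_transpose]

theorem minner_add_left (A B C : Matrix m k ℝ) : minner (A + B) C = minner A C + minner B C := by
  simp only [minner, transpose_add, Matrix.add_mul, trace_add]

theorem minner_sub_left (A B C : Matrix m k ℝ) : minner (A - B) C = minner A C - minner B C := by
  simp only [minner, transpose_sub, Matrix.sub_mul, trace_sub]

theorem minner_smul_left (r : ℝ) (A B : Matrix m k ℝ) : minner (r • A) B = r * minner A B := by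
  simp only [minner, transpose_smul, Matrix.smul_mul, trace_smul, smul_eq_mul]

theorem minner_add_right (A B C : Matrix m k ℝ) : minner A (B + C) = minner A B + minner A C := by
  simp only [minner, Matrix.mul_add, trace_add]

theorem minner_smul_right (r : ℝ) (A B : Matrix m k ℝ) : minner A (r • B) = r * minner A B := by
  simp only [minner, Matrix.mul_smul, trace_smul, smul_eq_mul]

theorem minner_mul_left (A : Matrix m k ℝ) (B : Matrix m l ℝ) (C : Matrix l k ℝ) :
    minner A (B * C) = minner (Bᵀ * A) C := by
  simp only [minner, transpose_mul, transpose_transpose, Matrix.mul_assoc]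

theorem minner_mul_right (A : Matrix m k ℝ) (B : Matrix m l ℝ) (C : Matrix l k ℝ) :
    minner A (B * C) = minner (A * Cᵀ) B := by
  simp only [minner, transpose_mul, transpose_transpose]
  rw [← Matrix.mul_assoc, trace_mul_comm, Matrix.mul_assoc]

theorem minner_transpose_right (A : Matrix m k ℝ) (B : Matrix k m ℝ) :
    minner A Bᵀ = minner Aᵀ B := by
  rw [minner, minner, transpose_transpose, ← transpose_mul, trace_transpose, trace_mul_comm]

theorem frob_sq_eq_minner (A : Matrix m k ℝ) : frob A ^ 2 = minner A A := by
  rw [frob, Real.sq_sqrt (by positivity), minner, trace, Finset.sum_comm]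
  simp [Matrix.mul_apply, sq]

noncomputable def minnerBilin : Matrix m k ℝ →ₗ[ℝ] Matrix m k ℝ →ₗ[ℝ] ℝ :=
  LinearMap.mk₂ ℝ minner minner_add_left minner_smul_left minner_add_right minner_smul_right

end TraceInner

section MatrixCalculus

variable {E : Type*} [NormedAddCommGroup E] [NormedSpace ℝ E] {x : E} {t : ℝ}
  {l m k : Type*} [Fintype l] [Fintype m] [Fintype k]

theorem DifferentiableAt.matrix_mul {u : E → Matrix l m ℝ} {v : E → Matrix m k ℝ}
    (hu : DifferentiableAt ℝ u x) (hv : DifferentiableAt ℝ v x) :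
    DifferentiableAt ℝ (fun y => u y * v y) x :=
  (mulLinearMap ℝ).differentiableAt_bilinear hu hv

theorem DifferentiableAt.minner {u v : E → Matrix m k ℝ} (hu : DifferentiableAt ℝ u x)
    (hv : DifferentiableAt ℝ v x) : DifferentiableAt ℝ (fun y => minner (u y) (v y)) x :=
  minnerBilin.differentiableAt_bilinear hu hv

theorem DifferentiableAt.matrix_transpose {u : E → Matrix m k ℝ} (hu : DifferentiableAt ℝ u x) :
    DifferentiableAt ℝ (fun y => (u y)ᵀ) x :=
  (LinearMap.toContinuousLinearMap
    (transposeLinearEquiv m k ℝ ℝ).toLinearMap).differentiableAt.comp x hu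

theorem HasDerivAt.matrix_mul {u : ℝ → Matrix l m ℝ} {v : ℝ → Matrix m k ℝ}
    {u' : Matrix l m ℝ} {v' : Matrix m k ℝ} (hu : HasDerivAt u u' t) (hv : HasDerivAt v v' t) :
    HasDerivAt (fun s => u s * v s) (u' * v t + u t * v') t :=
  (mulLinearMap ℝ).hasDerivAt_bilinear hu hv

theorem HasDerivAt.minner {u v : ℝ → Matrix m k ℝ} {u' v' : Matrix m k ℝ}
    (hu : HasDerivAt u u' t) (hv : HasDerivAt v v' t) :
    HasDerivAt (fun s => minner (u s) (v s)) (minner u' (v t) + minner (u t) v') t :=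
  minnerBilin.hasDerivAt_bilinear hu hv

theorem HasDerivAt.matrix_transpose {u : ℝ → Matrix m k ℝ} {u' : Matrix m k ℝ}
    (hu : HasDerivAt u u' t) : HasDerivAt (fun s => (u s)ᵀ) u'ᵀ t :=
  (LinearMap.toContinuousLinearMap
    (transposeLinearEquiv m k ℝ ℝ).toLinearMap).hasFDerivAt.comp_hasDerivAt t hu

end MatrixCalculus

section StiefelTerms

variable {m k : Type*} [Fintype m] [Fintype k]

theorem differentiable_smul_add_smul_mul_transpose_mul (a b : ℝ) :
    Differentiable ℝ fun X : Matrix m k ℝ => a • X + b • (X * Xᵀ * X) := fun _ =>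
  (differentiableAt_id.const_smul a).add
    (((differentiableAt_id.matrix_mul differentiableAt_id.matrix_transpose).matrix_mul
      differentiableAt_id).const_smul b)

theorem hasDerivAt_smul_add_smul_mul_transpose_mul (a b : ℝ) (X V : Matrix m k ℝ) :
    HasDerivAt (fun t : ℝ => a • (X + t • V) + b • ((X + t • V) * (X + t • V)ᵀ * (X + t • V)))
      (a • V + b • (V * Xᵀ * X + X * Vᵀ * X + X * Xᵀ * V)) 0 := by
  have hline := hasDerivAt_add_smul X V 0
  have hcubic : HasDerivAt (fun t : ℝ => (X + t • V) * (X + t • V)ᵀ * (X + t • V))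
      (V * Xᵀ * X + X * Vᵀ * X + X * Xᵀ * V) 0 := by
    simpa [Matrix.add_mul] using (hline.matrix_mul hline.matrix_transpose).matrix_mul hline
  exact (hline.fun_const_smul a).add (hcubic.fun_const_smul b)

variable [DecidableEq k]

theorem minner_smul_add_smul_mul_transpose_mul (a b : ℝ) (G X V : Matrix m k ℝ) :
    minner G (a • V + b • (V * Xᵀ * X + X * Vᵀ * X + X * Xᵀ * V))
      = minner (G * (a • 1 + b • (Xᵀ * X)) + (2 * b) • (X * symPart (Xᵀ * G))) V := by
  have h₁ : minner G (V * Xᵀ * X) = minner (G * (Xᵀ * X)) V := by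
    rw [Matrix.mul_assoc, minner_mul_right, transpose_mul, transpose_transpose]
  have h₂ : minner G (X * Vᵀ * X) = minner (X * (Xᵀ * G)ᵀ) V := by
    rw [Matrix.mul_assoc, minner_mul_left, minner_mul_right, minner_transpose_right]
    simp only [transpose_mul, transpose_transpose, Matrix.mul_assoc]
  have h₃ : minner G (X * Xᵀ * V) = minner (X * (Xᵀ * G)) V := by
    rw [Matrix.mul_assoc, minner_mul_left, minner_mul_left, transpose_transpose]
  simp only [minner_add_right, minner_smul_right, h₁, h₂, h₃, symPart, Matrix.mul_add,
    Matrix.mul_smul, Matrix.mul_one, minner_add_left, minner_smul_left]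
  ring

theorem differentiable_frob_sq_transpose_mul_sub_one :
    Differentiable ℝ fun X : Matrix m k ℝ => frob (Xᵀ * X - 1) ^ 2 := by
  have hS : Differentiable ℝ fun X : Matrix m k ℝ => Xᵀ * X - 1 := fun _ =>
    (differentiableAt_id.matrix_transpose.matrix_mul differentiableAt_id).sub_const 1
  simp only [frob_sq_eq_minner]
  exact fun X => (hS X).minner (hS X)

theorem hasDerivAt_frob_sq_transpose_mul_sub_one_add_smul (X V : Matrix m k ℝ) :
    HasDerivAt (fun t : ℝ => frob ((X + t • V)ᵀ * (X + t • V) - 1) ^ 2)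
      (4 * minner (X * (Xᵀ * X - 1)) V) 0 := by
  have hline := hasDerivAt_add_smul X V 0
  -- `simpa` cannot act on `hP.sub_const 1` directly: that term carries the Frobenius instances
  -- of `Matrix`, which `simp` does not identify with the standard ones.
  have hP : HasDerivAt (fun t : ℝ => (X + t • V)ᵀ * (X + t • V)) (Vᵀ * X + Xᵀ * V) 0 := by
    simpa using hline.matrix_transpose.matrix_mul hline
  have hS : HasDerivAt (fun t : ℝ => (X + t • V)ᵀ * (X + t • V) - 1) (Vᵀ * X + Xᵀ * V) 0 :=
    hP.sub_const 1
  have hsymm : (Xᵀ * X - 1)ᵀ = Xᵀ * X - 1 := by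
    rw [transpose_sub, transpose_mul, transpose_transpose, transpose_one]
  simp only [frob_sq_eq_minner]
  refine (hS.minner hS).congr_deriv ?_
  simp only [zero_smul, add_zero]
  rw [minner_comm (Vᵀ * X + Xᵀ * V), minner_add_right, minner_mul_right, minner_transpose_right,
    minner_mul_left, transpose_mul, transpose_transpose, hsymm]
  ring

end StiefelTerms

theorem stmt10_general {n p : ℕ} (f : Matrix (Fin n) (Fin p) ℝ → ℝ)
    (hf : ContDiff ℝ 1 f)
    (gradf : Matrix (Fin n) (Fin p) ℝ → Matrix (Fin n) (Fin p) ℝ)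
    (hgrad : ∀ X V, fderiv ℝ f X V = minner (gradf X) V)
    (σ β : ℝ) (hσ : σ ≠ 0)
    (A : Matrix (Fin n) (Fin p) ℝ → Matrix (Fin n) (Fin p) ℝ)
    (hA : ∀ X, A X = (1 - σ) • X + σ • (X * Xᵀ * X))
    (h : Matrix (Fin n) (Fin p) ℝ → ℝ)
    (hh : ∀ X, h X = (1 + 1 / (2 * σ)) * f X - 1 / (2 * σ) * f (A X)
        + β / 4 * frob (Xᵀ * X - 1) ^ 2) :
    Differentiable ℝ h ∧
      ∀ X V, fderiv ℝ h X V
        = minner ((1 + 1 / (2 * σ)) • gradf X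
            - gradf (A X) * (((1 - σ) / (2 * σ)) • (1 : Matrix (Fin p) (Fin p) ℝ)
                + (1 / 2 : ℝ) • (Xᵀ * X))
            - X * symPart (Xᵀ * gradf (A X))
            + β • (X * (Xᵀ * X - 1))) V := by
  have hfd : Differentiable ℝ f := hf.differentiable one_ne_zero
  have hAd : Differentiable ℝ A := by
    rw [show A = _ from funext hA]
    exact differentiable_smul_add_smul_mul_transpose_mul (1 - σ) σ
  obtain rfl : h = _ := funext hh
  have hd := ((hfd.const_mul (1 + 1 / (2 * σ))).sub ((hfd.comp hAd).const_mul (1 / (2 * σ)))).add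
    (differentiable_frob_sq_transpose_mul_sub_one.const_mul (β / 4))
  refine ⟨hd, fun X V => ?_⟩
  have hline := hasDerivAt_add_smul X V 0
  have hAX : HasDerivAt (fun t : ℝ => A (X + t • V))
      ((1 - σ) • V + σ • (V * Xᵀ * X + X * Vᵀ * X + X * Xᵀ * V)) 0 := by
    simp only [hA]
    exact hasDerivAt_smul_add_smul_mul_transpose_mul (1 - σ) σ X V
  have hfX := ((hfd X).hasFDerivAt.comp_hasDerivAt_of_eq 0 hline (by simp)).congr_deriv
    (hgrad X V)
  have hfAX := ((hfd (A X)).hasFDerivAt.comp_hasDerivAt_of_eq 0 hAX (by simp)).congr_deriv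
    (hgrad _ _)
  have hhX := ((hfX.const_mul (1 + 1 / (2 * σ))).sub (hfAX.const_mul (1 / (2 * σ)))).add
    ((hasDerivAt_frob_sq_transpose_mul_sub_one_add_smul X V).const_mul (β / 4))
  refine (fderiv_apply_eq_of_hasDerivAt_add_smul (hd X) hhX).trans ?_
  rw [minner_smul_add_smul_mul_transpose_mul]
  simp only [Matrix.mul_add, Matrix.mul_smul, Matrix.mul_one, minner_add_left, minner_sub_left,
    minner_smul_left]
  field_simp
  ring

/-- For `f` continuously differentiable with gradient `gradf`, `σ ≠ 0`, `β > 0`,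
`A(X) = (1 - σ)X + σXXᵀX` and
`h(X) = (1 + 1/(2σ))f(X) - (1/(2σ))f(A(X)) + (β/4)‖XᵀX - I‖_F²`, the function `h` is
differentiable and its gradient is
`∇h(X) = (1 + 1/(2σ))∇f(X) - ∇f(A(X))(((1-σ)/(2σ))I + (1/2)XᵀX) - X·sym(Xᵀ∇f(A(X)))
  + βX(XᵀX - I)`. -/
theorem stmt10 {n p : ℕ} (f : Matrix (Fin n) (Fin p) ℝ → ℝ)
    (hf : ContDiff ℝ 1 f)
    (gradf : Matrix (Fin n) (Fin p) ℝ → Matrix (Fin n) (Fin p) ℝ)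
    (hgrad : ∀ X V, fderiv ℝ f X V = minner (gradf X) V)
    (σ β : ℝ) (hσ : σ ≠ 0) (hβ : 0 < β)
    (A : Matrix (Fin n) (Fin p) ℝ → Matrix (Fin n) (Fin p) ℝ)
    (hA : ∀ X, A X = (1 - σ) • X + σ • (X * Xᵀ * X))
    (h : Matrix (Fin n) (Fin p) ℝ → ℝ)
    (hh : ∀ X, h X = (1 + 1 / (2 * σ)) * f X - 1 / (2 * σ) * f (A X)
        + β / 4 * frob (Xᵀ * X - 1) ^ 2) :
    Differentiable ℝ h ∧
      ∀ X V, fderiv ℝ h X V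
        = minner ((1 + 1 / (2 * σ)) • gradf X
            - gradf (A X) * (((1 - σ) / (2 * σ)) • (1 : Matrix (Fin p) (Fin p) ℝ)
                + (1 / 2 : ℝ) • (Xᵀ * X))
            - X * symPart (Xᵀ * gradf (A X))
            + β • (X * (Xᵀ * X - 1))) V :=
  stmt10_general f hf gradf hgrad σ β hσ A hA h hh
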